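/- For any 0 ≤ b ≤ a ≤ 1 with c = 1 − a ≥ 0, define in ℂ⁸ ⊗ ℂ^N (with orthonormal vectors η₀,…,η₇ in ℂ^N and \bar{k} = |k⟩ ⊗ η_k): x = √(a−b)·(\bar0+\bar1+\bar2+\bar3)/2 + √b·(\bar4+\bar5)/√2 + √c·\bar6 and y = √(a−b)·(\bar0+i\bar1−\bar2−i\bar3)/2 + √b·(\bar4−\bar5)/√2 + √c·\bar7. Let U = (Σ_{k=0}^{3} i^k |k⟩⟨k| + |4⟩⟨4| − |5⟩⟨5| + |6⟩⟨6| + |7⟩⟨7|) ⊗ I. Then x and y are orthogonal unit vectors, U is unitary, ⟨y, U x⟩ = a, and ⟨x, U y⟩ = b. -/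

import Mathlib

open scoped InnerProductSpace

noncomputable section

/-- `\bar k = |k⟩ ⊗ η_k` inside `ℂ⁸ ⊗ ℂ^N ≅ EuclideanSpace ℂ (Fin 8 × Fin N)`. -/
def bar {N : ℕ} (η : Fin 8 → EuclideanSpace ℂ (Fin N)) (k : Fin 8) :
    EuclideanSpace ℂ (Fin 8 × Fin N) :=
  WithLp.toLp 2 (fun p => (if p.1 = k then 1 else 0) * η k p.2)

/-- The state `x` of the tightness construction. -/
def xvec {N : ℕ} (η : Fin 8 → EuclideanSpace ℂ (Fin N)) (a b : ℝ) :
    EuclideanSpace ℂ (Fin 8 × Fin N) :=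
  ((Real.sqrt (a - b) : ℂ) / 2) • (bar η 0 + bar η 1 + bar η 2 + bar η 3)
    + ((Real.sqrt b : ℂ) / (Real.sqrt 2 : ℂ)) • (bar η 4 + bar η 5)
    + (Real.sqrt (1 - a) : ℂ) • bar η 6

/-- The state `y` of the tightness construction. -/
def yvec {N : ℕ} (η : Fin 8 → EuclideanSpace ℂ (Fin N)) (a b : ℝ) :
    EuclideanSpace ℂ (Fin 8 × Fin N) :=
  ((Real.sqrt (a - b) : ℂ) / 2) •
      (bar η 0 + Complex.I • bar η 1 - bar η 2 - Complex.I • bar η 3)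
    + ((Real.sqrt b : ℂ) / (Real.sqrt 2 : ℂ)) • (bar η 4 - bar η 5)
    + (Real.sqrt (1 - a) : ℂ) • bar η 7

/-- The phase `i^k` on `|k⟩` for `k = 0,…,3`, then `1, -1, 1, 1` on `|4⟩,…,|7⟩`. -/
def ph : Fin 8 → ℂ :=
  ![1, Complex.I, -1, -Complex.I, 1, -1, 1, 1]

/-- The unitary `U = (Σ_{k<4} i^k |k⟩⟨k| + |4⟩⟨4| - |5⟩⟨5| + |6⟩⟨6| + |7⟩⟨7|) ⊗ I`. -/
def Ufun {N : ℕ} (v : EuclideanSpace ℂ (Fin 8 × Fin N)) :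
    EuclideanSpace ℂ (Fin 8 × Fin N) :=
  WithLp.toLp 2 (fun p => ph p.1 * v p)

/-! The vectors `\bar k` are orthonormal, `x` and `y` have explicit coordinates in them, and `U`
multiplies the `k`-th coordinate by the phase `ph k`. So every inner product in the claim is a
finite sum `∑ k, conj (c k) * d k` of coordinates; with `s = √(a - b)`, `u = √b / √2` and
`r = √(1 - a)` these sums are `s² + 2u² + r² = 1`, `0`, `s² + 2u² = a` and `2u² = b`. `U` is
unitary because its phases have modulus one. -/

open scoped ComplexConjugate

theorem norm_eq_one_of_inner_self_eq_one {𝕜 E : Type*} [RCLike 𝕜] [NormedAddCommGroup E]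
    [InnerProductSpace 𝕜 E] {x : E} (hx : ⟪x, x⟫_𝕜 = 1) : ‖x‖ = 1 := by
  rw [norm_eq_sqrt_re_inner (𝕜 := 𝕜), hx]
  simp

theorem inner_toLp_mul_toLp_mul {ι : Type*} [Fintype ι] {d : ι → ℂ} (hd : ∀ i, ‖d i‖ = 1)
    (v w : EuclideanSpace ℂ ι) :
    ⟪WithLp.toLp 2 (fun i => d i * v i), WithLp.toLp 2 (fun i => d i * w i)⟫_ℂ = ⟪v, w⟫_ℂ := by
  simp only [PiLp.inner_apply, RCLike.inner_apply, map_mul]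
  refine Finset.sum_congr rfl fun i _ => ?_
  have hdi : conj (d i) * d i = 1 := by rw [Complex.conj_mul', hd i, Complex.ofReal_one, one_pow]
  linear_combination (conj (v i) * w i) * hdi

theorem bijective_toLp_mul {ι : Type*} {d : ι → ℂ} (hd : ∀ i, d i ≠ 0) :
    Function.Bijective fun v : EuclideanSpace ℂ ι => WithLp.toLp 2 (fun i => d i * v i) := by
  refine Function.bijective_iff_has_inverse.mpr
    ⟨fun v => WithLp.toLp 2 (fun i => (d i)⁻¹ * v i), fun v => ?_, fun v => ?_⟩ <;>
    ext i <;> simp [hd i]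

theorem inner_bar {N : ℕ} (η : Fin 8 → EuclideanSpace ℂ (Fin N)) (j k : Fin 8) :
    ⟪bar η j, bar η k⟫_ℂ = if j = k then ⟪η j, η k⟫_ℂ else 0 := by
  simp only [PiLp.inner_apply, RCLike.inner_apply, bar, map_mul, Fintype.sum_prod_type]
  split_ifs with hjk
  · subst hjk
    simp
  · simp [hjk]

theorem orthonormal_bar {N : ℕ} {η : Fin 8 → EuclideanSpace ℂ (Fin N)} (hη : Orthonormal ℂ η) :
    Orthonormal ℂ (bar η) := by
  rw [orthonormal_iff_ite] at hη ⊢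
  intro j k
  simp [inner_bar, hη]

theorem norm_ph (k : Fin 8) : ‖ph k‖ = 1 := by
  fin_cases k <;> simp [ph]

theorem Ufun_sum_smul_bar {N : ℕ} (η : Fin 8 → EuclideanSpace ℂ (Fin N)) (c : Fin 8 → ℂ) :
    Ufun (∑ k, c k • bar η k) = ∑ k, (ph k * c k) • bar η k := by
  ext p
  simp only [Ufun, bar, PiLp.toLp_apply, WithLp.ofLp_sum, Finset.sum_apply, PiLp.smul_apply,
    smul_eq_mul, Finset.mul_sum]
  refine Finset.sum_congr rfl fun k _ => ?_
  split_ifs with h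
  · rw [h]
    ring
  · ring

section Coefficients

variable (s u r : ℝ)

def xcoef : Fin 8 → ℂ :=
  ![s / 2, s / 2, s / 2, s / 2, u, u, r, 0]

def ycoef : Fin 8 → ℂ :=
  ![s / 2, Complex.I * s / 2, -s / 2, -Complex.I * s / 2, u, -u, 0, r]

theorem sum_conj_xcoef_mul_xcoef :
    ∑ k, conj (xcoef s u r k) * xcoef s u r k = s ^ 2 + 2 * u ^ 2 + r ^ 2 := by
  simp only [Fin.sum_univ_eight, xcoef, Matrix.cons_val, Matrix.cons_val_zero,
    Matrix.cons_val_one, map_div₀, map_zero, map_ofNat, Complex.conj_ofReal]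
  ring

theorem sum_conj_ycoef_mul_ycoef :
    ∑ k, conj (ycoef s u r k) * ycoef s u r k = s ^ 2 + 2 * u ^ 2 + r ^ 2 := by
  simp only [Fin.sum_univ_eight, ycoef, Matrix.cons_val, Matrix.cons_val_zero,
    Matrix.cons_val_one, map_div₀, map_neg, map_mul, map_zero, map_ofNat, Complex.conj_ofReal,
    Complex.conj_I]
  linear_combination (-s ^ 2 / 2) * Complex.I_sq

theorem sum_conj_xcoef_mul_ycoef : ∑ k, conj (xcoef s u r k) * ycoef s u r k = 0 := by
  simp only [Fin.sum_univ_eight, xcoef, ycoef, Matrix.cons_val, Matrix.cons_val_zero,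
    Matrix.cons_val_one, map_div₀, map_zero, map_ofNat, Complex.conj_ofReal]
  ring

theorem sum_conj_ycoef_mul_ph_mul_xcoef :
    ∑ k, conj (ycoef s u r k) * (ph k * xcoef s u r k) = s ^ 2 + 2 * u ^ 2 := by
  simp only [Fin.sum_univ_eight, xcoef, ycoef, ph, Matrix.cons_val, Matrix.cons_val_zero,
    Matrix.cons_val_one, map_div₀, map_neg, map_mul, map_zero, map_ofNat, Complex.conj_ofReal,
    Complex.conj_I]
  linear_combination (-s ^ 2 / 2) * Complex.I_sq

theorem sum_conj_xcoef_mul_ph_mul_ycoef :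
    ∑ k, conj (xcoef s u r k) * (ph k * ycoef s u r k) = 2 * u ^ 2 := by
  simp only [Fin.sum_univ_eight, xcoef, ycoef, ph, Matrix.cons_val, Matrix.cons_val_zero,
    Matrix.cons_val_one, map_div₀, map_zero, map_ofNat, Complex.conj_ofReal]
  linear_combination (s ^ 2 / 2) * Complex.I_sq

end Coefficients

theorem xvec_eq_sum {N : ℕ} (η : Fin 8 → EuclideanSpace ℂ (Fin N)) (a b : ℝ) :
    xvec η a b = ∑ k, xcoef √(a - b) (√b / √2) √(1 - a) k • bar η k := by
  simp only [xvec, xcoef, Fin.sum_univ_eight, Matrix.cons_val, Matrix.cons_val_zero,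
    Matrix.cons_val_one, Complex.ofReal_div]
  module

theorem yvec_eq_sum {N : ℕ} (η : Fin 8 → EuclideanSpace ℂ (Fin N)) (a b : ℝ) :
    yvec η a b = ∑ k, ycoef √(a - b) (√b / √2) √(1 - a) k • bar η k := by
  simp only [yvec, ycoef, Fin.sum_univ_eight, Matrix.cons_val, Matrix.cons_val_zero,
    Matrix.cons_val_one, Complex.ofReal_div]
  module

/-- In the tightness construction with `0 ≤ b ≤ a ≤ 1` and orthonormal
`η₀, …, η₇`, the vectors `x, y` are orthogonal unit vectors, `U` is unitary, and
`⟨y, U x⟩ = a`, `⟨x, U y⟩ = b`. -/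
theorem tightness_construction (N : ℕ)
    (η : Fin 8 → EuclideanSpace ℂ (Fin N)) (hη : Orthonormal ℂ η)
    (a b : ℝ) (hb : 0 ≤ b) (hba : b ≤ a) (ha : a ≤ 1) :
    ‖xvec η a b‖ = 1 ∧ ‖yvec η a b‖ = 1 ∧ ⟪xvec η a b, yvec η a b⟫_ℂ = 0 ∧
      (∀ v w : EuclideanSpace ℂ (Fin 8 × Fin N), ⟪Ufun v, Ufun w⟫_ℂ = ⟪v, w⟫_ℂ) ∧
      Function.Bijective (Ufun (N := N)) ∧
      ⟪yvec η a b, Ufun (xvec η a b)⟫_ℂ = (a : ℂ) ∧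
      ⟪xvec η a b, Ufun (yvec η a b)⟫_ℂ = (b : ℂ) := by
  have hs : √(a - b) ^ 2 = a - b := Real.sq_sqrt (by linarith)
  have hu : 2 * (√b / √2) ^ 2 = b := by
    rw [div_pow, Real.sq_sqrt hb, Real.sq_sqrt zero_le_two]
    ring
  have hr : √(1 - a) ^ 2 = 1 - a := Real.sq_sqrt (by linarith)
  have hbar := (orthonormal_bar hη).inner_sum
  rw [xvec_eq_sum, yvec_eq_sum, Ufun_sum_smul_bar, Ufun_sum_smul_bar]
  refine ⟨norm_eq_one_of_inner_self_eq_one (𝕜 := ℂ) ?_,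
    norm_eq_one_of_inner_self_eq_one (𝕜 := ℂ) ?_, ?_, inner_toLp_mul_toLp_mul fun p => norm_ph p.1,
    bijective_toLp_mul fun p => norm_ne_zero_iff.mp ((norm_ph p.1).trans_ne one_ne_zero), ?_, ?_⟩
  · rw [hbar, sum_conj_xcoef_mul_xcoef]
    exact_mod_cast show _ = (1 : ℝ) by linarith
  · rw [hbar, sum_conj_ycoef_mul_ycoef]
    exact_mod_cast show _ = (1 : ℝ) by linarith
  · rw [hbar, sum_conj_xcoef_mul_ycoef]
  · rw [hbar, sum_conj_ycoef_mul_ph_mul_xcoef]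
    exact_mod_cast show _ = a by linarith
  · rw [hbar, sum_conj_xcoef_mul_ph_mul_ycoef]
    exact_mod_cast hu

end
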